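/- arXiv:1009.0771 — 4 statements merged into one kernel-verified Lean document; each statement's English description precedes it below -/
import Mathlib

section
/- Let n, m be positive integers, let ε be a real number with 0 < ε < 1 and suppose n ≥ m/ε. Let α : Fin (2^m) → ℝ satisfy α_i ≥ 0 for all i and ∑_i α_i² = 1, and let C_n = √(∑_{j=1}^{2^n} 1/j). Define γ : Fin (2^n) × Fin (2^m) → ℝ by γ_{(j,i)} = α_i / (C_n · √j) (with j ranging over 1,…,2^n). Let g : Fin (2^{n+m}) → ℝ be the non-increasing rearrangement of γ, i.e. g = γ ∘ σ for some bijection σ : Fin (2^{n+m}) → Fin (2^n) × Fin (2^m) such that g is antitone. Then (1/C_n) · ∑_{r=1}^{2^n} g_r / √r ≥ 1 − ε. -/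
/-!
Write `w i = α i ^ 2`, `N = 2 ^ n` and `H = harmonic`, so that `C ^ 2 = H N`.

Since `(C * γ (j, i)) ^ 2 = w i / (j + 1)`, at most `(j + 1) / w i` coefficients are at least
`γ (j, i)`. So when `j + 1 ≤ N * w i` the coefficient `γ (j, i)` sits at a position `r < N` of the
rearrangement with `r + 1 ≤ (j + 1) / w i`, and it contributes at least `w i / (C * (j + 1))` to
`∑ r, g r / √(r + 1)`. Summing over these `(j, i)` bounds the overlap below by
`∑ i, w i * H ⌊N * w i⌋₊ / H N`.

`⌊N * w⌋₊` maximises `K ↦ w * H K - K / N`, so comparing every `⌊N * w i⌋₊` with `Q = 2 ^ (n - m)`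
and using `∑ i, ⌊N * w i⌋₊ > N - 2 ^ m` gives `∑ i, w i * H ⌊N * w i⌋₊ ≥ H Q - (2 ^ m - 1) / N`.

It remains to show `(1 - m / n) * H N ≤ H Q - (2 ^ m - 1) / N`. The margin is only of order `m / n`,
so crude bounds do not suffice: we use `log K + 1 / 2 ≤ H K` (Euler's constant exceeds `1 / 2`) and
`H N - H Q ≤ log (2 N + 1) - log (2 Q + 1)` (as `H K - log (2 K + 1)` decreases), after which the
claim is an inequality between powers of two.
-/

open Finset Real

lemma two_mul_div_le_log_add_sub_log {a b : ℝ} (ha : 0 < a) (hb : 0 < b) :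
    2 * b / (2 * a + b) ≤ log (a + b) - log a := by
  have h0 := le_hasSum (hasSum_log_one_add_inv (div_pos ha hb)) 0 fun k _ => by positivity
  have e1 : 1 + (a / b)⁻¹ = (a + b) / a := by field_simp
  have e2 : 1 / (2 * (a / b) + 1) = b / (2 * a + b) := by field_simp
  rw [e1, e2, log_div (by positivity) ha.ne'] at h0
  simpa [mul_div_assoc] using h0

lemma log_add_sub_log_le_div {a b : ℝ} (ha : 0 < a) (hb : 0 ≤ b) :
    log (a + b) - log a ≤ b / a := by
  rw [← log_div (by positivity) ha.ne', add_div, div_self ha.ne']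
  linarith [log_le_sub_one_of_pos (x := 1 + b / a) (by positivity)]

lemma antitone_harmonic_sub_log : Antitone fun K : ℕ => (harmonic K : ℝ) - log (2 * K + 1) := by
  refine antitone_nat_of_succ_le fun K => ?_
  have hstep := two_mul_div_le_log_add_sub_log (a := 2 * K + 1) (b := 2) (by positivity) two_pos
  have e1 : (2 : ℝ) * 2 / (2 * (2 * K + 1) + 2) = ((K : ℝ) + 1)⁻¹ := by field_simp; ring
  have e2 : (2 : ℝ) * K + 1 + 2 = 2 * ((K + 1 : ℕ) : ℝ) + 1 := by push_cast; ring
  rw [e1, e2] at hstep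
  simp only [harmonic_succ, Rat.cast_add, Rat.cast_inv, Rat.cast_natCast] at hstep ⊢
  push_cast at hstep ⊢
  linarith

lemma log_add_one_half_le_harmonic {K : ℕ} (hK : K ≠ 0) : log K + 1 / 2 ≤ harmonic K := by
  have h := one_half_lt_eulerMascheroniConstant.trans
    (eulerMascheroniConstant_lt_eulerMascheroniSeq' K)
  rw [eulerMascheroniSeq', if_neg hK] at h
  linarith

lemma harmonic_mul_sub_harmonic_le {D Q : ℕ} (hD : 0 < D) (hQ : 0 < Q) :
    (harmonic (D * Q) : ℝ) - harmonic Q ≤ log D + 1 / (2 * (D * Q)) - 2 / (4 * Q + 1) := by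
  have hmono := antitone_harmonic_sub_log (Nat.le_mul_of_pos_left Q hD)
  have hQ' : (0 : ℝ) < Q := by exact_mod_cast hQ
  have hD' : (0 : ℝ) < D := by exact_mod_cast hD
  have hup := log_add_sub_log_le_div (a := 2 * (D * Q)) (b := 1) (by positivity) zero_le_one
  have hlow := two_mul_div_le_log_add_sub_log (a := 2 * Q) (b := 1) (by positivity) one_pos
  have hlog : log (2 * (D * Q)) = log D + log (2 * Q) := by
    rw [mul_left_comm, log_mul hD'.ne' (by positivity)]
  have e : (2 : ℝ) * 1 / (2 * (2 * Q) + 1) = 2 / (4 * Q + 1) := by ring_nf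
  simp only [Nat.cast_mul] at hmono
  rw [e] at hlow
  linarith

lemma add_one_le_two_pow (t : ℕ) : (t : ℝ) + 1 ≤ 2 ^ t := by
  have : t + 1 ≤ 2 ^ t := Nat.lt_two_pow_self
  exact_mod_cast this

lemma inv_two_pow_sub_le {m t : ℕ} (hm : 0 < m) (ht : 0 < t) :
    1 / 2 ^ t - 2 / (4 * 2 ^ t + 1) - 1 / (2 * (2 ^ m * 2 ^ t)) ≤ (m : ℝ) / (2 * (m + t)) := by
  by_cases h : 2 ≤ m ∨ 2 ≤ t
  · have hpos : (0 : ℝ) ≤ 1 / (2 * (2 ^ m * 2 ^ t)) := by positivity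
    suffices key : 1 / (2 : ℝ) ^ t - 2 / (4 * 2 ^ t + 1) ≤ m / (2 * (m + t)) by linarith
    set Q : ℝ := 2 ^ t with hQdef
    have hQt : (t : ℝ) + 1 ≤ Q := add_one_le_two_pow t
    have hm1 : (1 : ℝ) ≤ m := by exact_mod_cast hm
    have ht1 : (1 : ℝ) ≤ t := by exact_mod_cast ht
    have hX : 0 ≤ 4 * Q ^ 2 - 3 * Q - 2 := by nlinarith
    have hQ1 : (0 : ℝ) ≤ 2 * Q + 1 := by positivity
    rw [div_sub_div _ _ (by positivity) (by positivity),
      div_le_div_iff₀ (by positivity) (by positivity)]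
    rcases h with hm2 | ht2
    · have hm2' : (2 : ℝ) ≤ m := by exact_mod_cast hm2
      nlinarith [mul_nonneg (sub_nonneg.2 hm2') hX, mul_nonneg (sub_nonneg.2 hQt) hQ1]
    · have hQt2 : (t : ℝ) + 2 ≤ Q := by
        obtain ⟨s, rfl⟩ := Nat.exists_eq_add_of_le ht2
        have := add_one_le_two_pow s
        rw [hQdef, pow_add]; push_cast; nlinarith
      nlinarith [mul_nonneg (sub_nonneg.2 hm1) hX, mul_nonneg (sub_nonneg.2 hQt2) hQ1]
  · obtain rfl : m = 1 := by omega
    obtain rfl : t = 1 := by omega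
    norm_num

lemma one_sub_div_mul_harmonic_two_pow_le {m n : ℕ} (hmn : m ≤ n) :
    (1 - m / n) * (harmonic (2 ^ n) : ℝ) ≤ harmonic (2 ^ (n - m)) - (2 ^ m - 1) / 2 ^ n := by
  obtain ⟨t, rfl⟩ := Nat.exists_eq_add_of_le hmn
  rw [Nat.add_sub_cancel_left]
  rcases Nat.eq_zero_or_pos m with rfl | hm
  · simp
  rcases Nat.eq_zero_or_pos t with rfl | ht
  · have : ((2 : ℝ) ^ m - 1) / 2 ^ m ≤ 1 := by rw [div_le_one (by positivity)]; linarith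
    simp [harmonic, hm.ne', this]
  have hdiff :=
    harmonic_mul_sub_harmonic_le (D := 2 ^ m) (Q := 2 ^ t) (by positivity) (by positivity)
  have hlow := log_add_one_half_le_harmonic (K := 2 ^ (m + t)) (by positivity)
  have hnum := inv_two_pow_sub_le hm ht
  rw [Nat.cast_pow, Real.log_pow] at hdiff hlow
  push_cast [pow_add] at hdiff hlow ⊢
  have hshare : (m : ℝ) / (m + t) * ((m + t) * log 2 + 1 / 2)
      ≤ m / (m + t) * harmonic (2 ^ m * 2 ^ t) :=
    mul_le_mul_of_nonneg_left (by linarith) (by positivity)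
  have e1 : (m : ℝ) / (m + t) * ((m + t) * log 2 + 1 / 2) = m * log 2 + m / (2 * (m + t)) := by
    field_simp
  have e2 : ((2 : ℝ) ^ m - 1) / (2 ^ m * 2 ^ t) = 1 / 2 ^ t - 1 / (2 ^ m * 2 ^ t) := by
    field_simp
  have e3 : 1 / (2 * ((2 : ℝ) ^ m * 2 ^ t)) = 1 / (2 ^ m * 2 ^ t) / 2 := by ring
  rw [e1] at hshare
  rw [e2]
  rw [e3] at hdiff hnum
  linarith

lemma sum_range_le_sum_range_of_sign_change {M : Type*} [AddCommMonoid M] [PartialOrder M]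
    [IsOrderedAddMonoid M] {f : ℕ → M} {K : ℕ} (hlt : ∀ k < K, 0 ≤ f k)
    (hge : ∀ k, K ≤ k → f k ≤ 0) (Q : ℕ) : ∑ k ∈ range Q, f k ≤ ∑ k ∈ range K, f k := by
  rcases le_total Q K with h | h
  · rw [← sum_range_add_sum_Ico f h]
    exact le_add_of_nonneg_right (sum_nonneg fun k hk => hlt k (mem_Ico.1 hk).2)
  · rw [← sum_range_add_sum_Ico f h]
    exact add_le_of_nonpos_right (sum_nonpos fun k hk => hge k (mem_Ico.1 hk).1)

lemma mul_harmonic_sub_le_mul_harmonic_floor {N : ℕ} (hN : 0 < N) {w : ℝ} (hw : 0 ≤ w) (Q : ℕ) :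
    w * harmonic Q - Q / N ≤ w * harmonic ⌊N * w⌋₊ - ⌊N * w⌋₊ / N := by
  have hN' : (0 : ℝ) < N := by exact_mod_cast hN
  have hsum (K : ℕ) : w * harmonic K - K / N = ∑ k ∈ range K, (w / (k + 1) - 1 / N) := by
    simp [harmonic, sum_sub_distrib, mul_sum, div_eq_mul_inv]
  rw [hsum, hsum]
  refine sum_range_le_sum_range_of_sign_change (fun k hk => ?_) (fun k hk => ?_) Q
  · have : (k : ℝ) + 1 ≤ N * w := by
      exact_mod_cast (Nat.le_floor_iff (by positivity)).1 hk
    rw [sub_nonneg, div_le_div_iff₀ hN' (by positivity)]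
    linarith
  · have : (N : ℝ) * w < k + 1 := by
      have := Nat.lt_floor_add_one ((N : ℝ) * w)
      have hk' : (⌊(N : ℝ) * w⌋₊ : ℝ) ≤ k := by exact_mod_cast hk
      linarith
    rw [sub_nonpos, div_le_div_iff₀ (by positivity) hN']
    linarith

lemma lt_sum_floor_add_card {ι : Type*} [Fintype ι] {w : ι → ℝ} (hw1 : ∑ i, w i = 1) (N : ℕ) :
    N < ∑ i, ⌊N * w i⌋₊ + Fintype.card ι := by
  have hne : (univ : Finset ι).Nonempty := by
    by_contra h
    simp [not_nonempty_iff_eq_empty.1 h] at hw1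
  have h : (N : ℝ) < ∑ i, ((⌊N * w i⌋₊ : ℝ) + 1) :=
    calc (N : ℝ) = ∑ i, N * w i := by rw [← mul_sum, hw1, mul_one]
      _ < _ := sum_lt_sum_of_nonempty hne fun i _ => Nat.lt_floor_add_one _
  rw [sum_add_distrib, sum_const, card_univ, nsmul_one] at h
  exact_mod_cast h

lemma harmonic_sub_le_sum_mul_harmonic_floor {ι : Type*} [Fintype ι] {w : ι → ℝ}
    (hw0 : ∀ i, 0 ≤ w i) (hw1 : ∑ i, w i = 1) {N Q : ℕ} (hN : 0 < N)
    (hQN : Q * Fintype.card ι = N) :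
    (harmonic Q : ℝ) - (Fintype.card ι - 1) / N ≤ ∑ i, w i * harmonic ⌊N * w i⌋₊ := by
  have hN' : (0 : ℝ) < N := by exact_mod_cast hN
  have hpt := sum_le_sum fun i (_ : i ∈ univ) => mul_harmonic_sub_le_mul_harmonic_floor hN (hw0 i) Q
  have hfl : (N : ℝ) + 1 ≤ ∑ i, (⌊N * w i⌋₊ : ℝ) + Fintype.card ι := by
    exact_mod_cast lt_sum_floor_add_card hw1 N
  rw [sum_sub_distrib, sum_sub_distrib, ← sum_mul, hw1, one_mul, sum_const, card_univ,
    nsmul_eq_mul, ← sum_div] at hpt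
  have hQN' : (Q : ℝ) * Fintype.card ι = N := by exact_mod_cast hQN
  have : ((Fintype.card ι : ℝ) - 1) / N
      = Fintype.card ι * (Q / N) - (N + 1 - Fintype.card ι) / N := by
    field_simp; linarith
  rw [this]
  have : (N + 1 - Fintype.card ι : ℝ) / N ≤ (∑ i, (⌊N * w i⌋₊ : ℝ)) / N := by gcongr; linarith
  linarith

lemma val_symm_add_one_le_card_filter {ι α : Type*} [Fintype ι] [LinearOrder α] {M : ℕ}
    {f : ι → α} (σ : Fin M ≃ ι) (hanti : Antitone (f ∘ σ)) (p : ι) :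
    (σ.symm p : ℕ) + 1 ≤ #{q | f p ≤ f q} := by
  rw [← Fin.card_Iic]
  refine card_le_card_of_injOn σ (fun j hj => ?_) σ.injective.injOn
  simpa using hanti (mem_Iic.1 hj)

lemma map_valEmbedding_filter_add_one_le_eq_range (M : ℕ) {y : ℝ} (hy : 0 ≤ y) :
    ({j : Fin M | (j : ℝ) + 1 ≤ y} : Finset (Fin M)).map Fin.valEmbedding
      = range (min M ⌊y⌋₊) := by
  ext k
  simp only [mem_map, mem_filter, mem_univ, true_and, Fin.valEmbedding_apply, mem_range,
    lt_min_iff]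
  rw [← Nat.add_one_le_iff (m := ⌊y⌋₊), Nat.le_floor_iff hy, Nat.cast_add_one]
  constructor
  · rintro ⟨j, hj, rfl⟩
    exact ⟨j.2, by exact_mod_cast hj⟩
  · rintro ⟨hk, hky⟩
    exact ⟨⟨k, hk⟩, by exact_mod_cast hky, rfl⟩

lemma card_filter_add_one_le_le {M : ℕ} {y : ℝ} (hy : 0 ≤ y) :
    (#{j : Fin M | (j : ℝ) + 1 ≤ y} : ℝ) ≤ y := by
  rw [← card_map Fin.valEmbedding, map_valEmbedding_filter_add_one_le_eq_range M hy,
    card_range]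
  calc ((min M ⌊y⌋₊ : ℕ) : ℝ) ≤ ⌊y⌋₊ := by exact_mod_cast min_le_right _ _
    _ ≤ y := Nat.floor_le hy

lemma sum_filter_add_one_le_eq_sum_range_floor {M : ℕ} (f : ℕ → ℝ) {y : ℝ} (hy : 0 ≤ y)
    (hyM : y ≤ M) :
    ∑ j ∈ ({j : Fin M | (j : ℝ) + 1 ≤ y} : Finset (Fin M)), f j = ∑ k ∈ range ⌊y⌋₊, f k := by
  have hmin : min M ⌊y⌋₊ = ⌊y⌋₊ := min_eq_right (Nat.floor_le_of_le hyM)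
  rw [← hmin, ← map_valEmbedding_filter_add_one_le_eq_range M hy, sum_map]
  rfl

lemma card_filter_le_div_le_inv {ι : Type*} [Fintype ι] {M : ℕ} {w : ι → ℝ}
    (hw0 : ∀ i, 0 ≤ w i) (hw1 : ∑ i, w i = 1) {x : ℝ} (hx : 0 < x) :
    (#{q : Fin M × ι | x ≤ w q.2 / (q.1 + 1)} : ℝ) ≤ x⁻¹ := by
  have hsplit : #{q : Fin M × ι | x ≤ w q.2 / (q.1 + 1)}
      = ∑ i, #{j : Fin M | (j : ℝ) + 1 ≤ w i / x} := by
    rw [card_filter, Fintype.sum_prod_type, sum_comm]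
    refine sum_congr rfl fun i _ => ?_
    rw [card_filter]
    refine sum_congr rfl fun j _ => if_congr ?_ rfl rfl
    rw [le_div_iff₀ (by positivity), le_div_iff₀ hx, mul_comm]
  rw [hsplit, Nat.cast_sum]
  calc ∑ i, (#{j : Fin M | (j : ℝ) + 1 ≤ w i / x} : ℝ) ≤ ∑ i, w i / x :=
        sum_le_sum fun i _ => card_filter_add_one_le_le (div_nonneg (hw0 i) hx.le)
    _ = x⁻¹ := by rw [← sum_div, hw1, one_div]

lemma sum_filter_div_eq_sum_mul_harmonic_floor {ι : Type*} [Fintype ι] {N : ℕ} {w : ι → ℝ}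
    (hw0 : ∀ i, 0 ≤ w i) (hw1 : ∀ i, w i ≤ 1) :
    ∑ p ∈ ({p : Fin N × ι | (p.1 : ℝ) + 1 ≤ N * w p.2} : Finset (Fin N × ι)), w p.2 / (p.1 + 1)
      = ∑ i, w i * harmonic ⌊N * w i⌋₊ := by
  rw [sum_filter, Fintype.sum_prod_type, sum_comm]
  refine sum_congr rfl fun i _ => ?_
  have hy : (0 : ℝ) ≤ N * w i := mul_nonneg N.cast_nonneg (hw0 i)
  have hyN : (N : ℝ) * w i ≤ N := mul_le_of_le_one_right N.cast_nonneg (hw1 i)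
  rw [← sum_filter, sum_filter_add_one_le_eq_sum_range_floor (fun k => w i / (k + 1)) hy hyN,
    harmonic]
  push_cast
  rw [mul_sum]
  simp [div_eq_mul_inv]

lemma sum_div_sqrt_le_sum_div_sqrt_of_antitone {ι : Type*} [Fintype ι] {M N : ℕ} (hNM : N ≤ M)
    {γ : ι → ℝ} (hγ : ∀ p, 0 ≤ γ p) (σ : Fin M ≃ ι) (hanti : Antitone (γ ∘ σ)) {S : Finset ι}
    {R : ι → ℝ} (hR : ∀ p ∈ S, (#{q | γ p ≤ γ q} : ℝ) ≤ R p) (hRN : ∀ p ∈ S, R p ≤ N) :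
    ∑ p ∈ S, γ p / √(R p) ≤ ∑ r : Fin N, (γ ∘ σ) (Fin.castLE hNM r) / √(r + 1) := by
  have hrank (p) (hp : p ∈ S) : ((σ.symm p : ℕ) : ℝ) + 1 ≤ R p :=
    le_trans (by exact_mod_cast val_symm_add_one_le_card_filter σ hanti p) (hR p hp)
  calc ∑ p ∈ S, γ p / √(R p) ≤ ∑ p ∈ S, γ p / √((σ.symm p : ℕ) + 1) :=
        sum_le_sum fun p hp => div_le_div_of_nonneg_left (hγ p) (by positivity)
          (sqrt_le_sqrt (hrank p hp))
    _ = ∑ r ∈ S.map σ.symm.toEmbedding, (γ ∘ σ) r / √(r + 1) := by simp [sum_map]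
    _ ≤ ∑ r ∈ univ.map (Fin.castLEEmb hNM), (γ ∘ σ) r / √(r + 1) := by
        refine sum_le_sum_of_subset_of_nonneg (fun r hr => ?_)
          fun r _ _ => div_nonneg (hγ _) (sqrt_nonneg _)
        obtain ⟨p, hp, rfl⟩ := mem_map.1 hr
        have hlt : ((σ.symm p : ℕ) : ℝ) < N := by linarith [hrank p hp, hRN p hp]
        exact mem_map.2 ⟨⟨σ.symm p, by exact_mod_cast hlt⟩, mem_univ _, rfl⟩
    _ = _ := by simp [sum_map]

lemma sum_mul_harmonic_floor_div_le {ι : Type*} [Fintype ι] {N M : ℕ} (hN : 0 < N)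
    (hNM : N ≤ M) {α : ι → ℝ} (hα0 : ∀ i, 0 ≤ α i) (hα1 : ∑ i, α i ^ 2 = 1) {C : ℝ}
    (hC : C = √(harmonic N)) {γ : Fin N × ι → ℝ} (hγ : ∀ p, γ p = α p.2 / (C * √(p.1 + 1)))
    (σ : Fin M ≃ Fin N × ι) (hanti : Antitone (γ ∘ σ)) :
    (∑ i, α i ^ 2 * harmonic ⌊(N : ℝ) * α i ^ 2⌋₊) / harmonic N
      ≤ 1 / C * ∑ r : Fin N, (γ ∘ σ) (Fin.castLE hNM r) / √(r + 1) := by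
  set v : Fin N × ι → ℝ := fun q => α q.2 ^ 2 / (q.1 + 1) with hv
  have hN' : (0 : ℝ) < N := by exact_mod_cast hN
  have hHN : (0 : ℝ) < harmonic N := by exact_mod_cast harmonic_pos hN.ne'
  have hC0 : 0 < C := hC ▸ sqrt_pos.2 hHN
  have hγv (q) : γ q = √(v q) / C := by
    rw [hγ, hv, sqrt_div (sq_nonneg _), sqrt_sq (hα0 _), div_div, mul_comm]
  have hle_iff (p q) : γ p ≤ γ q ↔ v p ≤ v q := by
    rw [hγv, hγv, div_le_div_iff_of_pos_right hC0, sqrt_le_sqrt_iff (by positivity)]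
  set S : Finset (Fin N × ι) := {p | (p.1 : ℝ) + 1 ≤ N * α p.2 ^ 2} with hS
  have hvS (p) (hp : p ∈ S) : (N : ℝ)⁻¹ ≤ v p := by
    rw [hS, mem_filter] at hp
    rw [inv_eq_one_div, div_le_div_iff₀ hN' (by positivity)]
    linarith [hp.2]
  have hR (p) (hp : p ∈ S) : (#{q | γ p ≤ γ q} : ℝ) ≤ (v p)⁻¹ := by
    rw [filter_congr fun q _ => hle_iff p q]
    exact card_filter_le_div_le_inv (fun i => sq_nonneg (α i)) hα1
      ((inv_pos.2 hN').trans_le (hvS p hp))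
  have hRN (p) (hp : p ∈ S) : (v p)⁻¹ ≤ N :=
    (inv_le_comm₀ ((inv_pos.2 hN').trans_le (hvS p hp)) hN').2 (hvS p hp)
  have key := sum_div_sqrt_le_sum_div_sqrt_of_antitone hNM
    (fun p => by rw [hγv]; positivity) σ hanti hR hRN
  have hterm (p) : γ p / √((v p)⁻¹) = v p / C := by
    rw [hγv, sqrt_inv, div_inv_eq_mul, div_mul_eq_mul_div, mul_self_sqrt (by positivity)]
  have hα1' (i) : α i ^ 2 ≤ 1 := hα1 ▸ single_le_sum (fun j _ => sq_nonneg (α j)) (mem_univ i)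
  rw [sum_congr rfl fun p _ => hterm p, ← sum_div, hv, hS,
    sum_filter_div_eq_sum_mul_harmonic_floor (fun i => sq_nonneg (α i)) hα1'] at key
  have hC2 : (harmonic N : ℝ) = C ^ 2 := by rw [hC, sq_sqrt hHN.le]
  calc (∑ i, α i ^ 2 * harmonic ⌊(N : ℝ) * α i ^ 2⌋₊) / harmonic N
      = 1 / C * ((∑ i, α i ^ 2 * harmonic ⌊(N : ℝ) * α i ^ 2⌋₊) / C) := by
        rw [hC2]; ring
    _ ≤ _ := by gcongr

/-- **Scalar core of the van Dam–Hayden embezzlement theorem.**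
With `C_n = √(∑_{j=1}^{2^n} 1/j)`, Schmidt coefficients `α` (nonnegative, squares summing
to 1), `γ_{(j,i)} = α_i / (C_n √j)`, and `g` a non-increasing rearrangement of `γ`
(indexed by `Fin (2^(n+m))`), the overlap `(1/C_n) ∑_{r=1}^{2^n} g_r / √r` is at least
`1 - ε`, provided `n ≥ m / ε`.  Here `j : Fin (2^n)` represents the integer `j + 1`. -/
theorem embezzlement_scalar_core (n m : ℕ)
    (ε : ℝ) (hε0 : 0 < ε) (hε1 : ε < 1) (hnm : (m : ℝ) / ε ≤ (n : ℝ))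
    (α : Fin (2 ^ m) → ℝ) (hα0 : ∀ i, 0 ≤ α i) (hα1 : ∑ i, α i ^ 2 = 1)
    (C : ℝ) (hC : C = Real.sqrt (∑ j : Fin (2 ^ n), 1 / ((j : ℝ) + 1)))
    (γ : Fin (2 ^ n) × Fin (2 ^ m) → ℝ)
    (hγ : ∀ p, γ p = α p.2 / (C * Real.sqrt ((p.1 : ℝ) + 1)))
    (σ : Fin (2 ^ (n + m)) ≃ Fin (2 ^ n) × Fin (2 ^ m))
    (g : Fin (2 ^ (n + m)) → ℝ) (hg : g = γ ∘ σ) (hanti : Antitone g) :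
    1 - ε ≤ (1 / C) * ∑ r : Fin (2 ^ n),
      g (Fin.castLE (Nat.pow_le_pow_right (by norm_num) (Nat.le_add_right n m)) r) /
        Real.sqrt ((r : ℝ) + 1) := by
  subst hg
  have hεn : (m : ℝ) ≤ ε * n := (div_le_iff₀' hε0).1 hnm
  have hmn : m ≤ n := by exact_mod_cast (show (m : ℝ) ≤ n by nlinarith [n.cast_nonneg (α := ℝ)])
  have hN : 0 < 2 ^ n := by positivity
  have hH : (0 : ℝ) < harmonic (2 ^ n) := by exact_mod_cast harmonic_pos hN.ne'
  have hC' : C = √(harmonic (2 ^ n)) := by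
    rw [hC, Fin.sum_univ_eq_sum_range (fun k => 1 / ((k : ℝ) + 1))]
    simp [harmonic]
  have hcard : 2 ^ (n - m) * Fintype.card (Fin (2 ^ m)) = 2 ^ n := by
    rw [Fintype.card_fin, ← pow_add, Nat.sub_add_cancel hmn]
  have hfloor := harmonic_sub_le_sum_mul_harmonic_floor (fun i => sq_nonneg (α i)) hα1 hN hcard
  calc 1 - ε ≤ 1 - m / n := by
        linarith [div_le_of_le_mul₀ n.cast_nonneg hε0.le hεn]
    _ ≤ (harmonic (2 ^ (n - m)) - (2 ^ m - 1) / 2 ^ n) / harmonic (2 ^ n) := by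
      rw [le_div_iff₀ hH]
      exact one_sub_div_mul_harmonic_two_pow_le hmn
    _ ≤ (∑ i, α i ^ 2 * harmonic ⌊((2 ^ n : ℕ) : ℝ) * α i ^ 2⌋₊) / harmonic (2 ^ n) := by
      gcongr
      simpa using hfloor
    _ ≤ _ := sum_mul_harmonic_floor_div_le hN _ hα0 hα1 hC' hγ σ hanti
end

section
/- Let n, m be positive integers, let ε be a real number with 0 < ε < 1 and suppose n ≥ m/ε. Let (θ_i) and (θ'_i) be orthonormal families in ℂ^{2^m}, let α : Fin (2^m) → ℝ with α_i ≥ 0 and ∑_i α_i² = 1, and let ψ = ∑_i α_i · θ_i ⊗ θ'_i ∈ ℂ^{2^m} ⊗ ℂ^{2^m}. Define γ : Fin (2^n) × Fin (2^m) → ℝ by γ_{(j,i)} = α_i/(C_n √j), and fix a bijection σ : Fin (2^{n+m}) → Fin (2^n) × Fin (2^m) with γ ∘ σ antitone; write σ(r) = (j_r, i_r). Define the embezzled state E(ψ) = (1/C_n) · ∑_{r=1}^{2^n} (1/√r) · (e_{j_r} ⊗ θ_{i_r}) ⊗ (e_{j_r} ⊗ θ'_{i_r}) ∈ (ℂ^{2^n}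 ⊗ ℂ^{2^m}) ⊗ (ℂ^{2^n} ⊗ ℂ^{2^m}), and let Φ be the canonical unitary reordering of tensor factors from (ℂ^{2^n} ⊗ ℂ^{2^n}) ⊗ (ℂ^{2^m} ⊗ ℂ^{2^m}) to (ℂ^{2^n} ⊗ ℂ^{2^m}) ⊗ (ℂ^{2^n} ⊗ ℂ^{2^m}). Then the inner product ⟨Φ(μ_n ⊗ ψ), E(ψ)⟩ is real and at least 1 − ε. -/
/-- Tensor product of vectors, in the function model of the tensor product of
Euclidean spaces: `(x ⊗ y) (a, b) = x a * y b`. -/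
noncomputable def tens {ι κ : Type*} (x : EuclideanSpace ℂ ι) (y : EuclideanSpace ℂ κ) :
    EuclideanSpace ℂ (ι × κ) :=
  WithLp.toLp 2 (fun p : ι × κ => x p.1 * y p.2)

/-- `C_n = √ (∑_{j=1}^{2^n} 1/j)` (here `j : Fin (2^n)` represents the integer `j + 1`). -/
noncomputable def Cconst (n : ℕ) : ℝ := Real.sqrt (∑ j : Fin (2 ^ n), 1 / ((j : ℝ) + 1))

/-- The van Dam–Hayden embezzlement state
`μ_n = (1/C_n) ∑_{j=1}^{2^n} (1/√j) e_j ⊗ e_j` on `ℂ^{2^n} ⊗ ℂ^{2^n}`. -/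
noncomputable def embezState (n : ℕ) : EuclideanSpace ℂ (Fin (2 ^ n) × Fin (2 ^ n)) :=
  ∑ j : Fin (2 ^ n), ((1 / (Cconst n * Real.sqrt ((j : ℝ) + 1)) : ℝ) : ℂ) •
    tens (EuclideanSpace.single j 1) (EuclideanSpace.single j 1)

/-- The canonical unitary reordering `Φ` of tensor factors, from
`(ℂ^a ⊗ ℂ^b) ⊗ (ℂ^c ⊗ ℂ^d)` to `(ℂ^a ⊗ ℂ^c) ⊗ (ℂ^b ⊗ ℂ^d)`, in the function model. -/
noncomputable def reorder {a b c d : Type*}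
    (v : EuclideanSpace ℂ ((a × b) × (c × d))) :
    EuclideanSpace ℂ ((a × c) × (b × d)) :=
  WithLp.toLp 2 (fun p : (a × c) × (b × d) => v ((p.1.1, p.2.1), (p.1.2, p.2.2)))

/-!
The overlap equals `∑_{r < 2^n} w_r γ_(r)` with `w_r = 1/(C_n √(r+1))` and `γ_(r)` the `r`-th
largest coefficient. Since `∑ αᵢ² = 1`, at most `1/(C_n t)²` of the coefficients
`αᵢ/(C_n √(j+1))` are `≥ t`, whence `γ_(r) ≤ w_r`; so the overlap is at least the sum of the `2^n`
largest `γ²`. That dominates the sum over the `2^n` entries with `j < 2^(n-m)`, which is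
`H(2^(n-m)) / H(2^n) ≥ (n-m)/n ≥ 1 - ε` for the harmonic numbers `H`, because `H_N - log N`
decreases.
-/

open Finset Real

lemma harmonic_sub_log_le_of_le {M N : ℕ} (hM : 1 ≤ M) (hMN : M ≤ N) :
    (harmonic N : ℝ) - log N ≤ harmonic M - log M := by
  have h := strictAnti_eulerMascheroniSeq'.antitone hMN
  rwa [eulerMascheroniSeq', eulerMascheroniSeq', if_neg (by omega), if_neg (by omega)] at h

lemma mul_harmonic_two_pow_le {a n : ℕ} (han : a ≤ n) :
    a * (harmonic (2 ^ n) : ℝ) ≤ n * harmonic (2 ^ a) := by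
  have hlog : ∀ k : ℕ, log ((2 ^ k : ℕ) : ℝ) = k * log 2 := fun k => by
    rw [Nat.cast_pow, Nat.cast_ofNat, Real.log_pow]
  have htail := harmonic_sub_log_le_of_le Nat.one_le_two_pow (Nat.pow_le_pow_right two_pos han)
  have hhead : a * log 2 ≤ harmonic (2 ^ a) := by
    rw [← hlog]
    exact (log_le_log (by positivity) (by push_cast; linarith)).trans (log_add_one_le_harmonic _)
  rw [hlog, hlog] at htail
  have hna : (0 : ℝ) ≤ n - a := sub_nonneg.mpr (by exact_mod_cast han)
  nlinarith [mul_le_mul_of_nonneg_left htail (Nat.cast_nonneg a : (0 : ℝ) ≤ a),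
    mul_le_mul_of_nonneg_left hhead hna]

lemma one_sub_mul_harmonic_two_pow_le {ε : ℝ} {m n : ℕ} (hε : 0 ≤ ε) (hmn : (m : ℝ) ≤ ε * n) :
    (1 - ε) * (harmonic (2 ^ n) : ℝ) ≤ harmonic (2 ^ (n - m)) := by
  rcases n.eq_zero_or_pos with rfl | hn
  · have hm : m = 0 := by exact_mod_cast le_antisymm (by simpa using hmn) m.cast_nonneg
    subst hm
    simp [harmonic, hε]
  · have hn' : (0 : ℝ) < n := by exact_mod_cast hn
    have hsub : (1 - ε) * n ≤ ((n - m : ℕ) : ℝ) := by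
      have : (n : ℝ) - m ≤ ((n - m : ℕ) : ℝ) := by
        rw [sub_le_iff_le_add]; exact_mod_cast le_tsub_add
      linarith
    have hH : (0 : ℝ) ≤ harmonic (2 ^ n) := by exact_mod_cast (harmonic_pos (by positivity)).le
    have := mul_harmonic_two_pow_le (Nat.sub_le n m)
    refine le_of_mul_le_mul_left ?_ hn'
    nlinarith [mul_le_mul_of_nonneg_right hsub hH]

lemma card_filter_add_one_le {N : ℕ} {B : ℝ} (hB : 0 ≤ B) :
    (#{j : Fin N | (j : ℝ) + 1 ≤ B} : ℝ) ≤ B := by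
  have hcard : #{j : Fin N | (j : ℝ) + 1 ≤ B} ≤ ⌊B⌋₊ := by
    rw [← card_range ⌊B⌋₊]
    refine card_le_card_of_injOn (fun j => (j : ℕ)) (fun j hj => ?_) Fin.val_injective.injOn
    have hj' : (j : ℝ) + 1 ≤ B := by simpa using hj
    simpa using Nat.lt_of_succ_le (Nat.le_floor (by exact_mod_cast hj'))
  exact (Nat.cast_le.mpr hcard).trans (Nat.floor_le hB)

lemma card_filter_le_div_sqrt_mul_sq_le {ι : Type*} [Fintype ι] {N : ℕ} (α : ι → ℝ) {t : ℝ}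
    (ht : 0 ≤ t) :
    (#{q : Fin N × ι | t ≤ α q.2 / √((q.1 : ℝ) + 1)} : ℝ) * t ^ 2 ≤ ∑ i, α i ^ 2 := by
  rcases ht.eq_or_lt with rfl | ht
  · simp [sum_nonneg, sq_nonneg]
  have hrow : ∀ i, (#{j : Fin N | t ≤ α i / √((j : ℝ) + 1)} : ℝ) ≤ α i ^ 2 / t ^ 2 := by
    intro i
    refine le_trans (Nat.cast_le.mpr (card_le_card (monotone_filter_right _ fun j _ hj => ?_)))
      (card_filter_add_one_le (by positivity))
    have hs : 0 < √((j : ℝ) + 1) := by positivity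
    rw [le_div_iff₀ hs] at hj
    rw [le_div_iff₀ (by positivity), ← sq_sqrt (by positivity : (0 : ℝ) ≤ j + 1)]
    nlinarith [mul_pos ht hs]
  have hsplit : #{q : Fin N × ι | t ≤ α q.2 / √((q.1 : ℝ) + 1)} =
      ∑ i, #{j : Fin N | t ≤ α i / √((j : ℝ) + 1)} := by
    rw [card_filter, Fintype.sum_prod_type, sum_comm]
    simp only [card_filter]
  rw [hsplit, Nat.cast_sum, sum_mul]
  refine sum_le_sum fun i _ => ?_
  calc _ ≤ α i ^ 2 / t ^ 2 * t ^ 2 := by gcongr; exact hrow i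
    _ = α i ^ 2 := by field_simp

lemma add_one_le_card_filter_of_antitone {κ β : Type*} [Fintype κ] [LinearOrder β] {M : ℕ}
    {f : κ → β} (σ : Fin M ≃ κ) (hf : Antitone (f ∘ σ)) (r : Fin M) :
    (r : ℕ) + 1 ≤ #{q | f (σ r) ≤ f q} := by
  rw [← Fin.card_Iic]
  refine card_le_card_of_injOn σ (fun s hs => ?_) σ.injective.injOn
  rw [coe_Iic, Set.mem_Iic] at hs
  simpa using hf hs

lemma sum_le_sum_castLE_of_antitone {β : Type*} [AddCommMonoid β] [PartialOrder β]
    [IsOrderedAddMonoid β] {M N : ℕ} (h : N ≤ M) {g : Fin M → β} (hg : Antitone g)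
    (S : Finset (Fin M)) (hS : #S = N) :
    ∑ s ∈ S, g s ≤ ∑ k : Fin N, g (Fin.castLE h k) := by
  set e := S.orderEmbOfFin hS
  have hle : ∀ k, Fin.castLE h k ≤ e k := fun k => by
    have hcard : #(Iic k) ≤ #(Iic (e k)) :=
      card_le_card_of_injOn e (fun x hx => by simpa using e.monotone (by simpa using hx))
        e.injective.injOn
    rw [Fin.card_Iic, Fin.card_Iic] at hcard
    exact Fin.le_def.mpr (by simpa using hcard)
  calc ∑ s ∈ S, g s = ∑ k, g (e k) := by
        rw [← S.image_orderEmbOfFin_univ hS, sum_image fun x _ y _ hxy => e.injective hxy]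
    _ ≤ _ := sum_le_sum fun k _ => hg (hle k)

lemma inner_tens {ι κ : Type*} [Fintype ι] [Fintype κ]
    (x y : EuclideanSpace ℂ ι) (z w : EuclideanSpace ℂ κ) :
    inner ℂ (tens x z) (tens y w) = inner ℂ x y * inner ℂ z w := by
  simp only [PiLp.inner_apply, tens, RCLike.inner_apply, Fintype.sum_prod_type, map_mul,
    sum_mul_sum]
  exact sum_congr rfl fun _ _ => sum_congr rfl fun _ _ => by ring

lemma inner_reorder_tens {a b c d : Type*} [Fintype a] [Fintype b] [Fintype c] [Fintype d]
    (x : EuclideanSpace ℂ (a × c)) (y : EuclideanSpace ℂ (b × d))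
    (u : EuclideanSpace ℂ a) (v : EuclideanSpace ℂ b) (u' : EuclideanSpace ℂ c)
    (v' : EuclideanSpace ℂ d) :
    inner ℂ (reorder (tens x y)) (tens (tens u v) (tens u' v')) =
      inner ℂ x (tens u u') * inner ℂ y (tens v v') := by
  simp only [PiLp.inner_apply, tens, reorder, RCLike.inner_apply, Fintype.sum_prod_type, map_mul,
    sum_mul_sum]
  exact sum_congr rfl fun _ _ => sum_congr rfl fun _ _ => sum_congr rfl fun _ _ =>
    sum_congr rfl fun _ _ => by ring

lemma inner_sum_smul_tens_of_orthonormal {ι κ : Type*} [Fintype ι] [Fintype κ] [DecidableEq ι]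
    {θ θ' : ι → EuclideanSpace ℂ κ} (hθ : Orthonormal ℂ θ) (hθ' : Orthonormal ℂ θ')
    (c : ι → ℂ) (k : ι) :
    inner ℂ (∑ t, c t • tens (θ t) (θ' t)) (tens (θ k) (θ' k)) = starRingEnd ℂ (c k) := by
  simp [inner_tens, orthonormal_iff_ite.mp hθ, orthonormal_iff_ite.mp hθ']

lemma inner_embezState_tens_single (n : ℕ) (j : Fin (2 ^ n)) :
    inner ℂ (embezState n) (tens (EuclideanSpace.single j 1) (EuclideanSpace.single j 1)) =
      ((1 / (Cconst n * √((j : ℝ) + 1)) : ℝ) : ℂ) := by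
  rw [embezState, inner_sum_smul_tens_of_orthonormal EuclideanSpace.orthonormal_single
    EuclideanSpace.orthonormal_single, Complex.conj_ofReal]

lemma inner_reorder_tens_embezState {ι κ : Type*} [Fintype ι] [Fintype κ] [DecidableEq ι]
    {θ θ' : ι → EuclideanSpace ℂ κ} (hθ : Orthonormal ℂ θ) (hθ' : Orthonormal ℂ θ')
    (α : ι → ℝ) (n : ℕ) (j : Fin (2 ^ n)) (i : ι) :
    inner ℂ (reorder (tens (embezState n) (∑ t, ((α t : ℝ) : ℂ) • tens (θ t) (θ' t))))
        (tens (tens (EuclideanSpace.single j 1) (θ i)) (tens (EuclideanSpace.single j 1) (θ' i))) =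
      ((α i / (Cconst n * √((j : ℝ) + 1)) : ℝ) : ℂ) := by
  rw [inner_reorder_tens, inner_embezState_tens_single,
    inner_sum_smul_tens_of_orthonormal hθ hθ', Complex.conj_ofReal]
  push_cast
  ring

lemma sq_Cconst (n : ℕ) : Cconst n ^ 2 = harmonic (2 ^ n) := by
  rw [Cconst, sq_sqrt (by positivity), harmonic, Rat.cast_sum,
    ← Fin.sum_univ_eq_sum_range (fun i => ((((i + 1 : ℕ) : ℚ)⁻¹ : ℚ) : ℝ))]
  push_cast
  simp [one_div]

lemma Cconst_pos (n : ℕ) : 0 < Cconst n :=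
  sqrt_pos.mpr (sum_pos (fun _ _ => by positivity) univ_nonempty)

section SchmidtCoefficients

variable {ι : Type*} [Fintype ι] {N : ℕ} {α : ι → ℝ} {C : ℝ} {γ : Fin N × ι → ℝ}

lemma apply_le_one_div_mul_sqrt_of_antitone {M : ℕ} (hα0 : ∀ i, 0 ≤ α i)
    (hα1 : ∑ i, α i ^ 2 ≤ 1) (hC : 0 < C)
    (hγ : ∀ p, γ p = α p.2 / (C * √((p.1 : ℝ) + 1)))
    (σ : Fin M ≃ Fin N × ι) (hanti : Antitone (γ ∘ σ)) (r : Fin M) :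
    γ (σ r) ≤ 1 / (C * √((r : ℝ) + 1)) := by
  set t := C * γ (σ r)
  have hγC : ∀ p, C * γ p = α p.2 / √((p.1 : ℝ) + 1) := fun p => by
    rw [hγ]; field_simp
  have ht : 0 ≤ t := mul_nonneg hC.le (by rw [hγ]; exact div_nonneg (hα0 _) (by positivity))
  have hfilter : #{q | γ (σ r) ≤ γ q} = #{q : Fin N × ι | t ≤ α q.2 / √((q.1 : ℝ) + 1)} := by
    simp only [t, ← hγC, mul_le_mul_iff_right₀ hC]
  have hrank : ((r : ℝ) + 1) * t ^ 2 ≤ 1 :=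
    calc ((r : ℝ) + 1) * t ^ 2
        ≤ #{q : Fin N × ι | t ≤ α q.2 / √((q.1 : ℝ) + 1)} * t ^ 2 := by
          gcongr
          exact_mod_cast hfilter ▸ add_one_le_card_filter_of_antitone σ hanti r
      _ ≤ ∑ i, α i ^ 2 := card_filter_le_div_sqrt_mul_sq_le α ht
      _ ≤ 1 := hα1
  have hts : t * √((r : ℝ) + 1) ≤ 1 := by
    rw [← sq_le_one_iff₀ (by positivity), mul_pow, sq_sqrt (by positivity)]
    linarith
  rw [le_div_iff₀ (by positivity)]
  calc γ (σ r) * (C * √((r : ℝ) + 1)) = t * √((r : ℝ) + 1) := by ring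
    _ ≤ 1 := hts

lemma sum_sq_first_rows_eq (hα1 : ∑ i, α i ^ 2 = 1)
    (hγ : ∀ p, γ p = α p.2 / (C * √((p.1 : ℝ) + 1)))
    {a : ℕ} (ha : a ≤ N) :
    ∑ p ∈ (univ.map (Fin.castLEEmb ha)) ×ˢ univ, γ p ^ 2 = harmonic a / C ^ 2 := by
  have hterm : ∀ p : Fin N × ι, γ p ^ 2 = α p.2 ^ 2 * ((p.1 : ℝ) + 1)⁻¹ / C ^ 2 := fun p => by
    rw [hγ, div_pow, mul_pow, sq_sqrt (by positivity), div_eq_mul_inv, mul_inv]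
    ring
  simp_rw [hterm, sum_product, sum_map, ← sum_div, ← sum_mul, hα1, one_mul, harmonic,
    Rat.cast_sum]
  rw [← Fin.sum_univ_eq_sum_range]
  simp

end SchmidtCoefficients

/-- **Theorem 1 (van Dam–Hayden embezzlement).**
For `n ≥ m/ε` and any bipartite state `ψ = ∑ᵢ αᵢ θᵢ ⊗ θ'ᵢ` on `2m` qubits (given in Schmidt
form), the overlap `⟨Φ(μ_n ⊗ ψ), E(ψ)⟩` with the embezzled version
`E(ψ) = (1/C_n) ∑_{r=1}^{2^n} (1/√r) (e_{j_r} ⊗ θ_{i_r}) ⊗ (e_{j_r} ⊗ θ'_{i_r})`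
is real and at least `1 - ε`.  Here `σ` is a bijection rearranging the coefficients
`γ_{(j,i)} = αᵢ/(C_n √j)` in non-increasing order and `σ r = (j_r, i_r)`. -/
theorem embezzlement_overlap (n m : ℕ)
    (ε : ℝ) (hε0 : 0 < ε) (hε1 : ε < 1) (hnm : (m : ℝ) / ε ≤ (n : ℝ))
    (θ θ' : Fin (2 ^ m) → EuclideanSpace ℂ (Fin (2 ^ m)))
    (hθ : Orthonormal ℂ θ) (hθ' : Orthonormal ℂ θ')
    (α : Fin (2 ^ m) → ℝ) (hα0 : ∀ i, 0 ≤ α i) (hα1 : ∑ i, α i ^ 2 = 1)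
    (ψ : EuclideanSpace ℂ (Fin (2 ^ m) × Fin (2 ^ m)))
    (hψ : ψ = ∑ i, ((α i : ℝ) : ℂ) • tens (θ i) (θ' i))
    (γ : Fin (2 ^ n) × Fin (2 ^ m) → ℝ)
    (hγ : ∀ p, γ p = α p.2 / (Cconst n * Real.sqrt ((p.1 : ℝ) + 1)))
    (σ : Fin (2 ^ (n + m)) ≃ Fin (2 ^ n) × Fin (2 ^ m))
    (hanti : Antitone (γ ∘ σ))
    (Eψ : EuclideanSpace ℂ ((Fin (2 ^ n) × Fin (2 ^ m)) × (Fin (2 ^ n) × Fin (2 ^ m))))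
    (hEψ : Eψ = ∑ r : Fin (2 ^ n),
      ((1 / (Cconst n * Real.sqrt ((r : ℝ) + 1)) : ℝ) : ℂ) •
        tens
          (tens (EuclideanSpace.single
              (σ (Fin.castLE (Nat.pow_le_pow_right (by norm_num) (Nat.le_add_right n m)) r)).1 1)
            (θ (σ (Fin.castLE (Nat.pow_le_pow_right (by norm_num) (Nat.le_add_right n m)) r)).2))
          (tens (EuclideanSpace.single
              (σ (Fin.castLE (Nat.pow_le_pow_right (by norm_num) (Nat.le_add_right n m)) r)).1 1)
            (θ' (σ (Fin.castLE (Nat.pow_le_pow_right (by norm_num) (Nat.le_add_right n m)) r)).2))) :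
    (inner ℂ (reorder (tens (embezState n) ψ)) Eψ : ℂ).im = 0 ∧
      1 - ε ≤ (inner ℂ (reorder (tens (embezState n) ψ)) Eψ : ℂ).re := by
  have hpow : 2 ^ n ≤ 2 ^ (n + m) := Nat.pow_le_pow_right (by norm_num) (Nat.le_add_right n m)
  have hγ0 (p) : 0 ≤ γ p := by
    rw [hγ]; exact div_nonneg (hα0 _) (mul_pos (Cconst_pos n) (by positivity)).le
  have hval : inner ℂ (reorder (tens (embezState n) ψ)) Eψ = ((∑ r : Fin (2 ^ n),
      1 / (Cconst n * √((r : ℝ) + 1)) * γ (σ (Fin.castLE hpow r)) : ℝ) : ℂ) := by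
    rw [hEψ, inner_sum, Complex.ofReal_sum]
    refine sum_congr rfl fun r _ => ?_
    rw [inner_smul_right, hψ, inner_reorder_tens_embezState hθ hθ', ← hγ, Complex.ofReal_mul]
  have hmε : (m : ℝ) ≤ ε * n := by rw [mul_comm]; exact (div_le_iff₀ hε0).mp hnm
  have hmn : m ≤ n := by exact_mod_cast hmε.trans (mul_le_of_le_one_left n.cast_nonneg hε1.le)
  set T : Finset (Fin (2 ^ n) × Fin (2 ^ m)) :=
    (univ.map (Fin.castLEEmb (Nat.pow_le_pow_right two_pos (n.sub_le m)))) ×ˢ univ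
  rw [hval, Complex.ofReal_im, Complex.ofReal_re]
  refine ⟨rfl, ?_⟩
  calc 1 - ε ≤ (harmonic (2 ^ (n - m)) : ℝ) / harmonic (2 ^ n) :=
        (le_div_iff₀ (mod_cast harmonic_pos (by positivity))).mpr
          (one_sub_mul_harmonic_two_pow_le hε0.le hmε)
    _ = ∑ p ∈ T, γ p ^ 2 := by rw [sum_sq_first_rows_eq hα1 hγ, sq_Cconst]
    _ = ∑ s ∈ T.map σ.symm.toEmbedding, γ (σ s) ^ 2 := by simp [sum_map]
    _ ≤ ∑ r : Fin (2 ^ n), γ (σ (Fin.castLE hpow r)) ^ 2 :=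
        sum_le_sum_castLE_of_antitone hpow (fun _ _ hst => pow_le_pow_left₀ (hγ0 _) (hanti hst) 2)
          _ (by simp [T, ← pow_add, Nat.sub_add_cancel hmn])
    _ ≤ _ := sum_le_sum fun r _ => by
        rw [sq]
        exact mul_le_mul_of_nonneg_right
          (apply_le_one_div_mul_sqrt_of_antitone hα0 hα1.le (Cconst_pos n) hγ σ hanti _) (hγ0 _)
end

section
/- Let n, m be positive integers, let (θ_i) and (θ'_i) be orthonormal families in ℂ^{2^m}, and let r ↦ (j_r, i_r) be an injective map from Fin (2^n) to Fin (2^n) × Fin (2^m). Then there exist unitaries U_A and U_B on ℂ^{2^n} ⊗ ℂ^{2^m} such that U_A(e_r ⊗ e_1) = e_{j_r} ⊗ θ_{i_r} and U_B(e_r ⊗ e_1) = e_{j_r} ⊗ θ'_{i_r} for all r, and consequently (U_A ⊗ U_B)(Φ(μ_n ⊗ e_1 ⊗ e_1)) = (1/C_n) ∑_{r=1}^{2^n} (1/√r) · (e_{j_r} ⊗ θ_{i_r}) ⊗ (e_{j_r} ⊗ θ'_{i_r}), where Φ is the canonical unitary reordering of tensor factors from (ℂ^{2^n} ⊗ ℂ^{2^n})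 ⊗ (ℂ^{2^m} ⊗ ℂ^{2^m}) to (ℂ^{2^n} ⊗ ℂ^{2^m}) ⊗ (ℂ^{2^n} ⊗ ℂ^{2^m}). -/
/-- The tensor (Kronecker) product `A ⊗ B` of two operators, acting on the function model
of the tensor product: `(A ⊗ B) v (p₁, p₂) = ∑_q (A e_{q₁}) p₁ * (B e_{q₂}) p₂ * v q`. -/
noncomputable def kron {ι κ : Type*} [Fintype ι] [Fintype κ] [DecidableEq ι] [DecidableEq κ]
    (A : EuclideanSpace ℂ ι ≃ₗᵢ[ℂ] EuclideanSpace ℂ ι)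
    (B : EuclideanSpace ℂ κ ≃ₗᵢ[ℂ] EuclideanSpace ℂ κ)
    (v : EuclideanSpace ℂ (ι × κ)) : EuclideanSpace ℂ (ι × κ) :=
  WithLp.toLp 2 (fun p : ι × κ => ∑ q : ι × κ,
    A (EuclideanSpace.single q.1 1) p.1 * B (EuclideanSpace.single q.2 1) p.2 * v q)

/-! The vectors `e_{j_r} ⊗ θ_{i_r}` form an orthonormal family indexed by `r`, because
`r ↦ (j_r, i_r)` is injective, so it extends to an orthonormal basis of `ℂ^{2^n} ⊗ ℂ^{2^m}`;
`U_A` is the unitary taking the standard basis to it with `e_r ⊗ e_1 ↦ e_{j_r} ⊗ θ_{i_r}`, and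
likewise `U_B`. After reordering, `μ_n ⊗ e_1 ⊗ e_1` is `∑_r c_r (e_r ⊗ e_1) ⊗ (e_r ⊗ e_1)`, on which
`U_A ⊗ U_B` acts term by term. -/

open EuclideanSpace Module

section TensorCalculus

variable {ι κ : Type*}

theorem tens_sum_smul_left {α : Type*} (s : Finset α) (c : α → ℂ) (x : α → EuclideanSpace ℂ ι)
    (y : EuclideanSpace ℂ κ) :
    tens (∑ a ∈ s, c a • x a) y = ∑ a ∈ s, c a • tens (x a) y := by
  ext p
  simp [tens, Finset.sum_mul, mul_assoc]

theorem tens_single_single [DecidableEq ι] [DecidableEq κ] (a : ι) (b : κ) :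
    tens (single a (1 : ℂ)) (single b 1) = single (a, b) 1 := by
  ext p
  simp only [tens, PiLp.single_apply, Prod.ext_iff]
  split_ifs <;> simp_all

theorem inner_tens_tens [Fintype ι] [Fintype κ] (x x' : EuclideanSpace ℂ ι)
    (y y' : EuclideanSpace ℂ κ) :
    inner ℂ (tens x y) (tens x' y') = inner ℂ x x' * inner ℂ y y' := by
  simp only [PiLp.inner_apply, RCLike.inner_apply, Fintype.sum_prod_type, Finset.sum_mul_sum,
    tens, map_mul]
  exact Finset.sum_congr rfl fun _ _ => Finset.sum_congr rfl fun _ _ => by ring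

theorem Orthonormal.tens [Fintype ι] [Fintype κ] {α β : Type*} {v : α → EuclideanSpace ℂ ι}
    {w : β → EuclideanSpace ℂ κ} (hv : Orthonormal ℂ v) (hw : Orthonormal ℂ w) :
    Orthonormal ℂ (fun p : α × β => tens (v p.1) (w p.2)) := by
  classical
  rw [orthonormal_iff_ite] at hv hw ⊢
  intro p q
  simp only [inner_tens_tens, hv, hw, Prod.ext_iff]
  split_ifs <;> simp_all

theorem reorder_sum_smul {a b c d α : Type*} (s : Finset α) (r : α → ℂ)
    (v : α → EuclideanSpace ℂ ((a × b) × (c × d))) :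
    reorder (∑ i ∈ s, r i • v i) = ∑ i ∈ s, r i • reorder (v i) := by
  ext p
  simp [reorder]

theorem reorder_single {a b c d : Type*} [DecidableEq a] [DecidableEq b] [DecidableEq c]
    [DecidableEq d] (q : (a × b) × (c × d)) :
    reorder (single q (1 : ℂ)) = single ((q.1.1, q.2.1), (q.1.2, q.2.2)) 1 := by
  ext p
  simp only [reorder, PiLp.single_apply, Prod.ext_iff]
  grind

variable [Fintype ι] [Fintype κ] [DecidableEq ι] [DecidableEq κ]
  (A : EuclideanSpace ℂ ι ≃ₗᵢ[ℂ] EuclideanSpace ℂ ι)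
  (B : EuclideanSpace ℂ κ ≃ₗᵢ[ℂ] EuclideanSpace ℂ κ)

theorem kron_sum_smul {α : Type*} (s : Finset α) (c : α → ℂ)
    (v : α → EuclideanSpace ℂ (ι × κ)) :
    kron A B (∑ a ∈ s, c a • v a) = ∑ a ∈ s, c a • kron A B (v a) := by
  ext p
  simp only [kron, WithLp.ofLp_sum, WithLp.ofLp_smul, Finset.sum_apply, Pi.smul_apply,
    smul_eq_mul, Finset.mul_sum]
  rw [Finset.sum_comm]
  exact Finset.sum_congr rfl fun _ _ => Finset.sum_congr rfl fun _ _ => by ring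

theorem kron_single (q : ι × κ) :
    kron A B (single q 1) = tens (A (single q.1 1)) (B (single q.2 1)) := by
  ext p
  simp [kron, tens, PiLp.single_apply]

end TensorCalculus

theorem reorder_tens_embezState_single {M : Type*} [DecidableEq M] (n : ℕ) (z : M) :
    reorder (tens (embezState n) (tens (single z 1) (single z 1))) =
      ∑ j : Fin (2 ^ n), ((1 / (Cconst n * Real.sqrt ((j : ℝ) + 1)) : ℝ) : ℂ) •
        single ((j, z), (j, z)) 1 := by
  simp only [embezState, tens_sum_smul_left, reorder_sum_smul, tens_single_single,
    reorder_single]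

theorem exists_linearIsometryEquiv_single_eq {𝕜 ι κ E : Type*} [RCLike 𝕜] [Fintype ι]
    [DecidableEq ι] [NormedAddCommGroup E] [InnerProductSpace 𝕜 E] [FiniteDimensional 𝕜 E]
    (hE : finrank 𝕜 E = Fintype.card ι) {e : κ → ι} (he : Function.Injective e) {g : κ → E}
    (hg : Orthonormal 𝕜 g) :
    ∃ U : EuclideanSpace 𝕜 ι ≃ₗᵢ[𝕜] E, ∀ k, U (single (e k) 1) = g k := by
  set v := Function.extend e g 0
  have hv : (Set.range e).domRestrict v = g ∘ (Equiv.ofInjective e he).symm := by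
    ext ⟨_, k, rfl⟩
    simp [v, he.extend_apply, Equiv.ofInjective_symm_apply]
  obtain ⟨b, hb⟩ :=
    (hv ▸ hg.comp _ (Equiv.injective _)).exists_orthonormalBasis_extension_of_card_eq hE
  exact ⟨b.repr.symm, fun k => by
    rw [b.repr_symm_single, hb _ ⟨k, rfl⟩]; exact he.extend_apply g 0 k⟩

theorem local_preparation_of_embezzled_state_general (n m : ℕ)
    (θ θ' : Fin (2 ^ m) → EuclideanSpace ℂ (Fin (2 ^ m)))
    (hθ : Orthonormal ℂ θ) (hθ' : Orthonormal ℂ θ')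
    (f : Fin (2 ^ n) → Fin (2 ^ n) × Fin (2 ^ m)) (hf : Function.Injective f) :
    ∃ (UA UB : EuclideanSpace ℂ (Fin (2 ^ n) × Fin (2 ^ m)) ≃ₗᵢ[ℂ]
        EuclideanSpace ℂ (Fin (2 ^ n) × Fin (2 ^ m))),
      (∀ r : Fin (2 ^ n),
        UA (tens (EuclideanSpace.single r 1) (EuclideanSpace.single 0 1)) =
          tens (EuclideanSpace.single (f r).1 1) (θ (f r).2)) ∧
      (∀ r : Fin (2 ^ n),
        UB (tens (EuclideanSpace.single r 1) (EuclideanSpace.single 0 1)) =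
          tens (EuclideanSpace.single (f r).1 1) (θ' (f r).2)) ∧
      kron UA UB (reorder (tens (embezState n)
          (tens (EuclideanSpace.single (0 : Fin (2 ^ m)) 1)
            (EuclideanSpace.single (0 : Fin (2 ^ m)) 1)))) =
        ∑ r : Fin (2 ^ n), ((1 / (Cconst n * Real.sqrt ((r : ℝ) + 1)) : ℝ) : ℂ) •
          tens (tens (EuclideanSpace.single (f r).1 1) (θ (f r).2))
            (tens (EuclideanSpace.single (f r).1 1) (θ' (f r).2)) := by
  have hrank : finrank ℂ (EuclideanSpace ℂ (Fin (2 ^ n) × Fin (2 ^ m))) =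
      Fintype.card (Fin (2 ^ n) × Fin (2 ^ m)) := finrank_euclideanSpace
  obtain ⟨UA, hUA⟩ := exists_linearIsometryEquiv_single_eq hrank (Prod.mk_left_injective 0)
    ((orthonormal_single.tens hθ).comp f hf)
  obtain ⟨UB, hUB⟩ := exists_linearIsometryEquiv_single_eq hrank (Prod.mk_left_injective 0)
    ((orthonormal_single.tens hθ').comp f hf)
  refine ⟨UA, UB, fun r => ?_, fun r => ?_, ?_⟩
  · rw [tens_single_single]; exact hUA r
  · rw [tens_single_single]; exact hUB r
  · simp only [reorder_tens_embezState_single, kron_sum_smul, kron_single]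
    exact Finset.sum_congr rfl fun r _ => by rw [hUA r, hUB r]; rfl

/-- **Local preparation of the embezzled state.**
Given orthonormal families `θ, θ'` in `ℂ^{2^m}` and an injective map `r ↦ (j_r, i_r)`,
there are local unitaries `U_A, U_B` on `ℂ^{2^n} ⊗ ℂ^{2^m}` with
`U_A (e_r ⊗ e_1) = e_{j_r} ⊗ θ_{i_r}` and `U_B (e_r ⊗ e_1) = e_{j_r} ⊗ θ'_{i_r}`, and
consequently `(U_A ⊗ U_B) (Φ (μ_n ⊗ e_1 ⊗ e_1)) = (1/C_n) ∑_r (1/√r) (e_{j_r} ⊗ θ_{i_r}) ⊗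
(e_{j_r} ⊗ θ'_{i_r})`.  (The first basis vector `e_1` is `EuclideanSpace.single 0 1`.) -/
theorem local_preparation_of_embezzled_state (n m : ℕ) (hn : 0 < n) (hm : 0 < m)
    (θ θ' : Fin (2 ^ m) → EuclideanSpace ℂ (Fin (2 ^ m)))
    (hθ : Orthonormal ℂ θ) (hθ' : Orthonormal ℂ θ')
    (f : Fin (2 ^ n) → Fin (2 ^ n) × Fin (2 ^ m)) (hf : Function.Injective f) :
    ∃ (UA UB : EuclideanSpace ℂ (Fin (2 ^ n) × Fin (2 ^ m)) ≃ₗᵢ[ℂ]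
        EuclideanSpace ℂ (Fin (2 ^ n) × Fin (2 ^ m))),
      (∀ r : Fin (2 ^ n),
        UA (tens (EuclideanSpace.single r 1) (EuclideanSpace.single 0 1)) =
          tens (EuclideanSpace.single (f r).1 1) (θ (f r).2)) ∧
      (∀ r : Fin (2 ^ n),
        UB (tens (EuclideanSpace.single r 1) (EuclideanSpace.single 0 1)) =
          tens (EuclideanSpace.single (f r).1 1) (θ' (f r).2)) ∧
      kron UA UB (reorder (tens (embezState n)
          (tens (EuclideanSpace.single (0 : Fin (2 ^ m)) 1)
            (EuclideanSpace.single (0 : Fin (2 ^ m)) 1)))) =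
        ∑ r : Fin (2 ^ n), ((1 / (Cconst n * Real.sqrt ((r : ℝ) + 1)) : ℝ) : ℂ) •
          tens (tens (EuclideanSpace.single (f r).1 1) (θ (f r).2))
            (tens (EuclideanSpace.single (f r).1 1) (θ' (f r).2)) :=
  local_preparation_of_embezzled_state_general n m θ θ' hθ hθ' f hf
end

section
/- For all positive integers n and m, n · ∑_{j=1}^{2^{n+m}} 1/j ≤ (n + m) · ∑_{j=1}^{2^n} 1/j; equivalently, the ratio (∑_{j=1}^{2^n} 1/j) / (∑_{j=1}^{2^{n+m}} 1/j) is at least n/(n+m). -/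
/-!
Comparing with `∫ dx/x`: `H_{2^n} ≥ log (2^n + 1) ≥ n log 2`, while going from `2^n` to
`2^(n+m)` adds at most `log 2^(n+m) - log 2^n = m log 2`. Hence
`n H_{2^(n+m)} ≤ n H_{2^n} + m (n log 2) ≤ (n + m) H_{2^n}`.
-/

open Finset Real

theorem sum_Ico_one_div_succ_le_log_sub_log {a b : ℕ} (ha : 0 < a) (hab : a ≤ b) :
    ∑ j ∈ Ico a b, 1 / ((j : ℝ) + 1) ≤ log b - log a := by
  have ha' : (0 : ℝ) < a := by exact_mod_cast ha
  have hanti : AntitoneOn (fun x : ℝ ↦ x⁻¹) (Set.Icc (a : ℝ) b) :=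
    fun x hx y _ hxy ↦ inv_anti₀ (ha'.trans_le hx.1) hxy
  calc ∑ j ∈ Ico a b, 1 / ((j : ℝ) + 1) = ∑ j ∈ Ico a b, ((j + 1 : ℕ) : ℝ)⁻¹ := by
        push_cast; simp only [one_div]
    _ ≤ ∫ x in (a : ℝ)..b, x⁻¹ := hanti.sum_le_integral_Ico hab
    _ = log b - log a := by
        have hb' : (0 : ℝ) < b := ha'.trans_le (by exact_mod_cast hab)
        rw [integral_inv_of_pos ha' hb', log_div hb'.ne' ha'.ne']

theorem log_add_one_le_sum_range (N : ℕ) :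
    log ((N : ℝ) + 1) ≤ ∑ j ∈ range N, 1 / ((j : ℝ) + 1) := by
  simpa [harmonic, one_div] using log_add_one_le_harmonic N

theorem mul_log_two_le_sum_range_two_pow (n : ℕ) :
    n * log 2 ≤ ∑ j ∈ range (2 ^ n), 1 / ((j : ℝ) + 1) :=
  calc n * log 2 = log ((2 ^ n : ℕ) : ℝ) := by push_cast; rw [log_pow]
    _ ≤ log ((2 ^ n : ℕ) + 1) := log_le_log (by positivity) (by linarith)
    _ ≤ _ := log_add_one_le_sum_range _

theorem sum_range_two_pow_add_le (n m : ℕ) :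
    ∑ j ∈ range (2 ^ (n + m)), 1 / ((j : ℝ) + 1) ≤
      ∑ j ∈ range (2 ^ n), 1 / ((j : ℝ) + 1) + m * log 2 := by
  have hle : 2 ^ n ≤ 2 ^ (n + m) := Nat.pow_le_pow_right two_pos (Nat.le_add_right n m)
  rw [← sum_range_add_sum_Ico _ hle, add_le_add_iff_left]
  calc _ ≤ log ((2 ^ (n + m) : ℕ) : ℝ) - log ((2 ^ n : ℕ) : ℝ) :=
        sum_Ico_one_div_succ_le_log_sub_log (Nat.two_pow_pos n) hle
    _ = m * log 2 := by push_cast; rw [log_pow, log_pow]; push_cast; ring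

theorem harmonic_pow_two_ratio_general (n m : ℕ) :
    (n : ℝ) * ∑ j ∈ Finset.range (2 ^ (n + m)), 1 / ((j : ℝ) + 1) ≤
      ((n : ℝ) + (m : ℝ)) * ∑ j ∈ Finset.range (2 ^ n), 1 / ((j : ℝ) + 1) := by
  set H := ∑ j ∈ range (2 ^ n), 1 / ((j : ℝ) + 1)
  calc (n : ℝ) * ∑ j ∈ range (2 ^ (n + m)), 1 / ((j : ℝ) + 1)
      ≤ n * (H + m * log 2) := by gcongr; exact sum_range_two_pow_add_le n m
    _ = n * H + m * (n * log 2) := by ring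
    _ ≤ n * H + m * H := by gcongr; exact mul_log_two_le_sum_range_two_pow n
    _ = (n + m) * H := by ring

/-- **Harmonic number ratio bound at powers of two.**
`n · H_{2^(n+m)} ≤ (n+m) · H_{2^n}`, where `H_N = ∑_{j=1}^N 1/j`. -/
theorem harmonic_pow_two_ratio (n m : ℕ) (hn : 0 < n) (hm : 0 < m) :
    (n : ℝ) * ∑ j ∈ Finset.range (2 ^ (n + m)), 1 / ((j : ℝ) + 1) ≤
      ((n : ℝ) + (m : ℝ)) * ∑ j ∈ Finset.range (2 ^ n), 1 / ((j : ℝ) + 1) :=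
  harmonic_pow_two_ratio_general n m
end
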